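/- Let q : K → Q be a surjective simplicial map of finite simplicial complexes (meaning every simplex of Q is the image of a simplex of K). If every p-cycle of K whose image under q is trivial (null-homologous) in Q is itself trivial in a larger complex L ⊇ K, then β_p(K, L) ≤ β_p(Q), where β_p(K, L) is the rank of the image of H_p(K) → H_p(L). -/
import Mathlib


attribute [local instance] Classical.propDecidable

/-- The mod-2 simplicial boundary operator on formal sums of finite vertex sets. -/
noncomputable def bdry (V : Type*) [DecidableEq V] :
    (Finset V →₀ ZMod 2) →ₗ[ZMod 2] (Finset V →₀ ZMod 2) :=
  Finsupp.lsum (ZMod 2) fun σ =>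
    LinearMap.toSpanSingleton (ZMod 2) _ (∑ v ∈ σ, Finsupp.single (σ.erase v) (1 : ZMod 2))

/-- Chains supported on the `p`-simplices (sets of `p+1` vertices) of `K`. -/
noncomputable def chainsIn {V : Type*} (K : Set (Finset V)) (p : ℕ) :
    Submodule (ZMod 2) (Finset V →₀ ZMod 2) :=
  Finsupp.supported (ZMod 2) (ZMod 2) {σ | σ ∈ K ∧ σ.card = p + 1}

noncomputable def cyclesIn {V : Type*} [DecidableEq V] (K : Set (Finset V)) (p : ℕ) :
    Submodule (ZMod 2) (Finset V →₀ ZMod 2) :=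
  chainsIn K p ⊓ LinearMap.ker (bdry V)

noncomputable def bdriesIn {V : Type*} [DecidableEq V] (K : Set (Finset V)) (p : ℕ) :
    Submodule (ZMod 2) (Finset V →₀ ZMod 2) :=
  Submodule.map (bdry V) (chainsIn K (p + 1))

/-- The `p`-th persistent Betti number of `K ⊆ L`: the rank of the image of
`H_p(K) → H_p(L)`, computed as `Z_p(K) / (Z_p(K) ∩ B_p(L))`. -/
noncomputable def pBetti {V : Type*} [DecidableEq V] (K L : Set (Finset V)) (p : ℕ) : Cardinal :=
  Module.rank (ZMod 2) ↥(Submodule.map (bdriesIn L p).mkQ (cyclesIn K p))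

noncomputable def betti {V : Type*} [DecidableEq V] (K : Set (Finset V)) (p : ℕ) : Cardinal :=
  pBetti K K p

/-- Pushforward of a `p`-chain along a vertex map; degenerate simplices are dropped and
coinciding images cancel mod 2. -/
noncomputable def pushChain {V W : Type*} [DecidableEq V] [DecidableEq W]
    (q : V → W) (p : ℕ) (c : Finset V →₀ ZMod 2) : Finset W →₀ ZMod 2 :=
  Finsupp.filter (fun τ => τ.card = p + 1)
    (Finsupp.mapDomain (fun σ : Finset V => σ.image q) c)

/-- Gluing vertices `x` and `y` of a `p`-chain to a new vertex `z`. -/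
noncomputable def glueChain {V : Type*} [DecidableEq V] (x y z : V) (p : ℕ)
    (c : Finset V →₀ ZMod 2) : Finset V →₀ ZMod 2 :=
  pushChain (fun v => if v = x ∨ v = y then z else v) p c

/-- The star of a vertex in a chain: the simplices of the chain containing it. -/
noncomputable def starChain {V : Type*} (x : V) (c : Finset V →₀ ZMod 2) :
    Finset V →₀ ZMod 2 :=
  Finsupp.filter (fun σ => x ∈ σ) c

/-- The cone over a chain with apex `z`. -/
noncomputable def coneChain {V : Type*} [DecidableEq V] (z : V) (c : Finset V →₀ ZMod 2) :
    Finset V →₀ ZMod 2 :=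
  Finsupp.mapDomain (insert z) c

section Aux
variable {V : Type*} {W : Type*} [DecidableEq V] [DecidableEq W]

/-- `filter P ∘ mapDomain (image q)` as a linear map. -/
noncomputable def filtMap (q : V → W) (P : Finset W → Prop) :
    (Finset V →₀ ZMod 2) →ₗ[ZMod 2] (Finset W →₀ ZMod 2) where
  toFun c := Finsupp.filter P (Finsupp.mapDomain (fun σ : Finset V => σ.image q) c)
  map_add' c d := by simp only [Finsupp.mapDomain_add, Finsupp.filter_add]
  map_smul' r c := by simp only [Finsupp.mapDomain_smul, Finsupp.filter_smul]; rfl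

lemma filter_ext {P : Finset W → Prop} (inst1 inst2 : DecidablePred P) (f : Finset W →₀ ZMod 2) :
    @Finsupp.filter _ _ _ P inst1 f = @Finsupp.filter _ _ _ P inst2 f := by
  congr!

lemma pushChain_eq_filtMap (q : V → W) (p : ℕ) (c : Finset V →₀ ZMod 2) :
    pushChain q p c = filtMap q (fun τ => τ.card = p + 1) c := by
  unfold pushChain filtMap
  simp only [LinearMap.coe_mk, AddHom.coe_mk]
  exact filter_ext _ _ _

lemma filter_single_aux (P : Finset W → Prop) [inst : DecidablePred P] (τ : Finset W) :
    Finsupp.filter P (Finsupp.single τ (1 : ZMod 2)) =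
      if P τ then Finsupp.single τ 1 else 0 := by
  split_ifs with h
  · exact Finsupp.filter_single_of_pos _ h
  · exact Finsupp.filter_single_of_neg _ h

lemma bdry_single (σ : Finset V) :
    bdry V (Finsupp.single σ (1 : ZMod 2)) =
      ∑ v ∈ σ, Finsupp.single (σ.erase v) (1 : ZMod 2) := by
  simp [bdry]

lemma filtMap_single (q : V → W) (P : Finset W → Prop) [inst : DecidablePred P] (s : Finset V) :
    filtMap q P (Finsupp.single s (1 : ZMod 2)) =
      if P (s.image q) then Finsupp.single (s.image q) 1 else 0 := by
  unfold filtMap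
  simp only [LinearMap.coe_mk, AddHom.coe_mk]
  rw [Finsupp.mapDomain_single]
  exact (filter_ext _ inst _).trans (filter_single_aux P _)

end Aux

section Key
variable {V : Type*} {W : Type*} [DecidableEq V] [DecidableEq W]

set_option linter.unusedSectionVars false

lemma card_filter_even (q : V → W) (p : ℕ) (σ : Finset V) (hσ : σ.card = p + 1)
    (hinj : ¬ Set.InjOn q σ) :
    2 ∣ (σ.filter (fun v => ((σ.erase v).image q).card = p)).card := by
  have hle : (σ.image q).card ≤ p := by
    rcases lt_or_eq_of_le (Finset.card_image_le (s := σ) (f := q)) with h | h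
    · omega
    · exact absurd (Finset.injOn_of_card_image_eq (s := σ) (f := q) h) hinj
  have hsub : ∀ v ∈ σ, (σ.erase v).image q ⊆ σ.image q :=
    fun v hv => Finset.image_subset_image (Finset.erase_subset v σ)
  by_cases hp : (σ.image q).card = p
  · -- exactly one collision pair
    have hchar : ∀ v ∈ σ, (((σ.erase v).image q).card = p ↔ ∃ u ∈ σ.erase v, q u = q v) := by
      intro v hv
      constructor
      · intro h
        have heq : (σ.erase v).image q = σ.image q :=
          Finset.eq_of_subset_of_card_le (hsub v hv) (by omega)
        have hqv : q v ∈ (σ.erase v).image q := by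
          rw [heq]; exact Finset.mem_image_of_mem q hv
        obtain ⟨u, hu, hqu⟩ := Finset.mem_image.mp hqv
        exact ⟨u, hu, hqu⟩
      · rintro ⟨u, hu, hqu⟩
        have hτsub : σ.image q ⊆ (σ.erase v).image q := by
          intro w hw
          obtain ⟨x, hx, rfl⟩ := Finset.mem_image.mp hw
          by_cases hxv : x = v
          · subst hxv
            exact Finset.mem_image.mpr ⟨u, hu, hqu⟩
          · exact Finset.mem_image.mpr ⟨x, Finset.mem_erase.mpr ⟨hxv, hx⟩, rfl⟩
        rw [Finset.Subset.antisymm (hsub v hv) hτsub]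
        exact hp
    have hTeq : σ.filter (fun v => ((σ.erase v).image q).card = p) =
        σ.filter (fun v => ∃ u ∈ σ.erase v, q u = q v) :=
      Finset.filter_congr hchar
    rw [hTeq]
    set T := σ.filter (fun v => ∃ u ∈ σ.erase v, q u = q v) with hTdef
    have hTsub : T ⊆ σ := Finset.filter_subset _ _
    have hmemT : ∀ v, v ∈ T ↔ v ∈ σ ∧ ∃ u ∈ σ.erase v, q u = q v := by
      intro v; rw [hTdef, Finset.mem_filter]
    set S := σ \ T with hSdef
    have hST : T ∪ S = σ := Finset.union_sdiff_of_subset hTsub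
    have hdisj : Disjoint T S := Finset.disjoint_sdiff
    have hSinj : Set.InjOn q ↑S := by
      intro a ha b hb hab
      by_contra hne
      have haσ := (Finset.mem_sdiff.mp ha).1
      have haT := (Finset.mem_sdiff.mp ha).2
      exact haT ((hmemT a).mpr ⟨haσ, ⟨b, Finset.mem_erase.mpr
        ⟨fun h => hne h.symm, (Finset.mem_sdiff.mp hb).1⟩, hab.symm⟩⟩)
    have himdisj : Disjoint (T.image q) (S.image q) := by
      rw [Finset.disjoint_left]
      rintro w hwT hwS
      obtain ⟨t, htT, rfl⟩ := Finset.mem_image.mp hwT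
      obtain ⟨s, hsS, hqs⟩ := Finset.mem_image.mp hwS
      have hsσ := (Finset.mem_sdiff.mp hsS).1
      have hsT := (Finset.mem_sdiff.mp hsS).2
      have hts : t ≠ s := fun h => hsT (h ▸ htT)
      exact hsT ((hmemT s).mpr ⟨hsσ, ⟨t, Finset.mem_erase.mpr ⟨hts, hTsub htT⟩, hqs.symm⟩⟩)
    have himU : T.image q ∪ S.image q = σ.image q := by
      rw [← Finset.image_union, hST]
    have c1 : (T.image q).card + S.card = p := by
      rw [← Finset.card_image_of_injOn hSinj, ← Finset.card_union_of_disjoint himdisj, himU, hp]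
    have c2 : T.card + S.card = p + 1 := by
      rw [← Finset.card_union_of_disjoint hdisj, hST, hσ]
    have hfib : ∀ w ∈ T.image q, 2 ≤ (T.filter (fun a => q a = w)).card := by
      rintro w hw
      obtain ⟨v, hvT, rfl⟩ := Finset.mem_image.mp hw
      obtain ⟨hvσ, u, hu, hqu⟩ := (hmemT v).mp hvT
      have huv : u ≠ v := (Finset.mem_erase.mp hu).1
      have huσ : u ∈ σ := (Finset.mem_erase.mp hu).2
      have huT : u ∈ T := (hmemT u).mpr
        ⟨huσ, ⟨v, Finset.mem_erase.mpr ⟨fun h => huv h.symm, hvσ⟩, hqu.symm⟩⟩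
      have hpair : ({v, u} : Finset V) ⊆ T.filter (fun a => q a = q v) := by
        intro x hx
        rcases Finset.mem_insert.mp hx with rfl | hx
        · exact Finset.mem_filter.mpr ⟨hvT, rfl⟩
        · rw [Finset.mem_singleton.mp hx]
          exact Finset.mem_filter.mpr ⟨huT, hqu⟩
      calc 2 = ({v, u} : Finset V).card := (Finset.card_pair (fun h => huv h.symm)).symm
        _ ≤ _ := Finset.card_le_card hpair
    have hsum : T.card = ∑ w ∈ T.image q, (T.filter (fun a => q a = w)).card :=
      Finset.card_eq_sum_card_image q T
    have hge : 2 * (T.image q).card ≤ T.card := by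
      have h := Finset.card_nsmul_le_sum (T.image q)
        (fun w => (T.filter (fun a => q a = w)).card) 2 hfib
      rw [smul_eq_mul] at h
      omega
    have himg1 : (T.image q).card = 1 := by
      rcases Nat.eq_zero_or_pos (T.image q).card with h0 | h1
      · exfalso
        have hTe : T = ∅ := Finset.image_eq_empty.mp (Finset.card_eq_zero.mp h0)
        have hT0 : T.card = 0 := by rw [hTe]; rfl
        omega
      · omega
    have : T.card = 2 := by omega
    omega
  · -- no face has full-size image
    have : σ.filter (fun v => ((σ.erase v).image q).card = p) = ∅ := by
      apply Finset.filter_false_of_mem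
      intro v hv h
      have := Finset.card_le_card (hsub v hv)
      omega
    rw [this]
    simp

end Key

section Key2
variable {V : Type*} {W : Type*} [DecidableEq V] [DecidableEq W]

set_option linter.unusedSectionVars false

/-- Chain-map identity on a single nondegenerate simplex. -/
lemma key_single (q : V → W) (p : ℕ) (σ : Finset V) (hσ : σ.card = p + 1) :
    bdry W (filtMap q (fun τ => τ.card = p + 1) (Finsupp.single σ (1 : ZMod 2))) =
      filtMap q (fun τ => τ.card = p) (bdry V (Finsupp.single σ (1 : ZMod 2))) := by
  have hRHS : filtMap q (fun τ => τ.card = p) (bdry V (Finsupp.single σ (1 : ZMod 2))) =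
      ∑ v ∈ σ, if ((σ.erase v).image q).card = p
        then Finsupp.single ((σ.erase v).image q) (1 : ZMod 2) else 0 := by
    rw [bdry_single, map_sum]
    exact Finset.sum_congr rfl fun v _ => filtMap_single q _ _
  rw [hRHS, filtMap_single]
  by_cases hinj : Set.InjOn q σ
  · -- injective case
    have hτ : (σ.image q).card = p + 1 := by
      rw [Finset.card_image_of_injOn hinj, hσ]
    rw [if_pos hτ, bdry_single]
    have himg : ∀ v ∈ σ, (σ.erase v).image q = (σ.image q).erase (q v) := by
      intro v hv
      ext w
      simp only [Finset.mem_image, Finset.mem_erase]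
      constructor
      · rintro ⟨u, ⟨hu1, hu2⟩, rfl⟩
        exact ⟨fun h => hu1 (hinj hu2 hv h), ⟨u, hu2, rfl⟩⟩
      · rintro ⟨hw, u, hu, rfl⟩
        exact ⟨u, ⟨fun h => hw (by rw [h]), hu⟩, rfl⟩
    rw [Finset.sum_image (fun x hx y hy h => hinj hx hy h)]
    refine Finset.sum_congr rfl fun v hv => ?_
    have hcard : ((σ.erase v).image q).card = p := by
      rw [himg v hv, Finset.card_erase_of_mem (Finset.mem_image_of_mem q hv), hτ]
      omega
    rw [if_pos hcard, himg v hv]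
  · -- non-injective case
    have hle : (σ.image q).card ≤ p := by
      rcases lt_or_eq_of_le (Finset.card_image_le (s := σ) (f := q)) with h | h
      · omega
      · exact absurd (Finset.injOn_of_card_image_eq (s := σ) (f := q) h) hinj
    rw [if_neg (by omega), map_zero]
    have hsub : ∀ v ∈ σ, (σ.erase v).image q ⊆ σ.image q :=
      fun v hv => Finset.image_subset_image (Finset.erase_subset v σ)
    have hrw : ∀ v ∈ σ, (if ((σ.erase v).image q).card = p
        then Finsupp.single ((σ.erase v).image q) (1 : ZMod 2) else 0) =
        (if ((σ.erase v).image q).card = p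
        then Finsupp.single (σ.image q) (1 : ZMod 2) else 0) := by
      intro v hv
      split_ifs with h
      · rw [Finset.eq_of_subset_of_card_le (hsub v hv) (by omega)]
      · rfl
    rw [Finset.sum_congr rfl hrw, ← Finset.sum_filter, Finset.sum_const]
    obtain ⟨k, hk⟩ := card_filter_even q p σ hσ hinj
    rw [hk]
    have : (2 * k) • Finsupp.single (σ.image q) (1 : ZMod 2) =
        ((2 * k : ℕ) : ZMod 2) • Finsupp.single (σ.image q) (1 : ZMod 2) :=
      (Nat.cast_smul_eq_nsmul _ _ _).symm
    rw [this]
    have h2 : ((2 * k : ℕ) : ZMod 2) = 0 := by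
      rw [ZMod.natCast_eq_zero_iff]
      exact ⟨k, rfl⟩
    rw [h2, zero_smul]

end Key2

section Final
variable {V : Type*} {W : Type*} [DecidableEq V] [DecidableEq W]

set_option linter.unusedSectionVars false

lemma bdry_filtMap (q : V → W) (p : ℕ) (c : Finset V →₀ ZMod 2)
    (hc : ∀ σ ∈ c.support, σ.card = p + 1) :
    bdry W (filtMap q (fun τ => τ.card = p + 1) c) =
      filtMap q (fun τ => τ.card = p) (bdry V c) := by
  have hmem : c ∈ Finsupp.supported (ZMod 2) (ZMod 2) {σ : Finset V | σ.card = p + 1} := by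
    rw [Finsupp.mem_supported]
    intro σ hσ
    exact hc σ hσ
  rw [Finsupp.supported_eq_span_single] at hmem
  clear hc
  induction hmem using Submodule.span_induction with
  | mem x hx =>
    obtain ⟨σ, hσ, rfl⟩ := hx
    exact key_single q p σ hσ
  | zero => simp
  | add x y _ _ hx hy => simp only [map_add, hx, hy]
  | smul r x _ hx => simp only [map_smul, hx]

lemma push_mem_cycles (q : V → W) (Kv : Set (Finset V)) (Qw : Set (Finset W)) (p : ℕ)
    (hsimp : ∀ σ ∈ Kv, σ.image q ∈ Qw)
    (c : Finset V →₀ ZMod 2) (hz : c ∈ cyclesIn Kv p) :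
    pushChain q p c ∈ cyclesIn Qw p := by
  have hchain : c ∈ chainsIn Kv p := hz.1
  have hker : c ∈ LinearMap.ker (bdry V) := hz.2
  rw [chainsIn, Finsupp.mem_supported] at hchain
  have h1 : pushChain q p c ∈ chainsIn Qw p := by
    rw [chainsIn, Finsupp.mem_supported]
    intro τ hτ
    rw [pushChain, Finsupp.support_filter, Finset.coe_filter] at hτ
    obtain ⟨hτ1, hτ2⟩ := hτ
    have := Finsupp.mapDomain_support (f := fun σ : Finset V => σ.image q) hτ1
    obtain ⟨σ, hσ, rfl⟩ := Finset.mem_image.mp this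
    exact ⟨hsimp σ (hchain hσ).1, hτ2⟩
  have hk0 : (bdry V) c = 0 := hker
  have h2 : pushChain q p c ∈ LinearMap.ker (bdry W) := by
    rw [LinearMap.mem_ker, pushChain_eq_filtMap,
      bdry_filtMap q p c (fun σ hσ => (hchain hσ).2), hk0, map_zero]
  exact ⟨h1, h2⟩

end Final


universe u v

/-- if `q : K → Q` is a surjective simplicial map and every `p`-cycle of `K`
whose image is trivial in `Q` is trivial in `L ⊇ K`, then `β_p(K, L) ≤ β_p(Q)`. -/
theorem pBetti_le_betti_of_surjective {V : Type u} {W : Type v} [DecidableEq V] [DecidableEq W]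
    (q : V → W) (K L : Set (Finset V)) (Q : Set (Finset W)) (p : ℕ)
    (hKL : K ⊆ L)
    (hsimp : ∀ σ ∈ K, σ.image q ∈ Q)
    (hsurj : ∀ τ ∈ Q, ∃ σ ∈ K, σ.image q = τ)
    (htriv : ∀ c ∈ cyclesIn K p, pushChain q p c ∈ bdriesIn Q p → c ∈ bdriesIn L p) :
    Cardinal.lift.{v} (pBetti K L p) ≤ Cardinal.lift.{u} (betti Q p) := by
  classical
  set Z := cyclesIn K p with hZ
  let φ : Z →ₗ[ZMod 2] ((Finset V →₀ ZMod 2) ⧸ bdriesIn L p) :=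
    (bdriesIn L p).mkQ ∘ₗ Z.subtype
  let ψ : Z →ₗ[ZMod 2] ((Finset W →₀ ZMod 2) ⧸ bdriesIn Q p) :=
    (bdriesIn Q p).mkQ ∘ₗ (filtMap q (fun τ => τ.card = p + 1)) ∘ₗ Z.subtype
  have hker : LinearMap.ker ψ ≤ LinearMap.ker φ := by
    rintro ⟨z, hz⟩ h
    simp only [ψ, φ, LinearMap.mem_ker, LinearMap.comp_apply, Submodule.subtype_apply,
      Submodule.mkQ_apply, Submodule.Quotient.mk_eq_zero] at h ⊢
    rw [← pushChain_eq_filtMap] at h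
    exact htriv z hz h
  have hrange : LinearMap.range ψ ≤ Submodule.map (bdriesIn Q p).mkQ (cyclesIn Q p) := by
    rintro x ⟨⟨z, hz⟩, rfl⟩
    refine ⟨pushChain q p z, push_mem_cycles q K Q p hsimp z hz, ?_⟩
    simp only [ψ, LinearMap.comp_apply, Submodule.subtype_apply, Submodule.mkQ_apply,
      pushChain_eq_filtMap]
  have e1 : pBetti K L p = Module.rank (ZMod 2) (Z ⧸ LinearMap.ker φ) := by
    have h : Submodule.map (bdriesIn L p).mkQ (cyclesIn K p) = LinearMap.range φ := by
      show _ = LinearMap.range ((bdriesIn L p).mkQ ∘ₗ Z.subtype)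
      rw [LinearMap.range_comp, Submodule.range_subtype]
    rw [pBetti, h]
    exact ((LinearMap.quotKerEquivRange φ).rank_eq).symm
  have e2 : Module.rank (ZMod 2) (Z ⧸ LinearMap.ker φ) ≤
      Module.rank (ZMod 2) (Z ⧸ LinearMap.ker ψ) := by
    have hker' : LinearMap.ker ψ ≤ (LinearMap.ker φ).comap LinearMap.id := hker
    have hsurj2 : Function.Surjective
        (Submodule.mapQ (LinearMap.ker ψ) (LinearMap.ker φ) LinearMap.id hker') := by
      intro x
      obtain ⟨z, rfl⟩ := Submodule.mkQ_surjective _ x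
      exact ⟨Submodule.Quotient.mk z, by rw [Submodule.mapQ_apply]; rfl⟩
    exact LinearMap.rank_le_of_surjective _ hsurj2
  have e3 : Cardinal.lift.{v} (Module.rank (ZMod 2) (Z ⧸ LinearMap.ker ψ)) =
      Cardinal.lift.{u} (Module.rank (ZMod 2) (LinearMap.range ψ)) :=
    (LinearMap.quotKerEquivRange ψ).lift_rank_eq
  have e4 : Module.rank (ZMod 2) (LinearMap.range ψ) ≤
      Module.rank (ZMod 2) (Submodule.map (bdriesIn Q p).mkQ (cyclesIn Q p)) :=
    Submodule.rank_mono hrange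
  have e5 : betti Q p =
      Module.rank (ZMod 2) (Submodule.map (bdriesIn Q p).mkQ (cyclesIn Q p)) := rfl
  calc Cardinal.lift.{v} (pBetti K L p)
      = Cardinal.lift.{v} (Module.rank (ZMod 2) (Z ⧸ LinearMap.ker φ)) := by rw [e1]
    _ ≤ Cardinal.lift.{v} (Module.rank (ZMod 2) (Z ⧸ LinearMap.ker ψ)) :=
        Cardinal.lift_le.mpr e2
    _ = Cardinal.lift.{u} (Module.rank (ZMod 2) (LinearMap.range ψ)) := e3
    _ ≤ Cardinal.lift.{u} (betti Q p) := by rw [e5]; exact Cardinal.lift_le.mpr e4
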